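/- Let S ⊆ {1, 2, 3, …}. In the group G_S, for all w, x, y, z ∈ K the commutator satisfies [(w,x),(y,z)] = (w,x)(y,z)(w,x)^{-1}(y,z)^{-1} = (η_S(x,z) − η_S(x,−x) − η_S(z,−z) + η_S(−x,−z) + η_S(x+z,−x−z), 0); in particular every commutator lies in the central subgroup N = K × {0}. Moreover, for every j ∈ ℤ and every integer k ≥ 1, [(0, t^j), (0, t^{j+2k})] = (s_k·t^{j+k}, 0), where s_k = 1 if k ∈ S and s_k = 0 otherwise. -/

import Mathlib

open Filter Topology
open scoped commutatorElement

noncomputable section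


/-- `𝔽_p((t))`, the field of formal Laurent series over `𝔽_p = ℤ/pℤ`. -/
abbrev Kp (p : ℕ) : Type := HahnSeries ℤ (ZMod p)

lemma isPWO_Ici (a : ℤ) : (Set.Ici a).IsPWO := by
  have h2 : ((fun k : ℕ => a + (k : ℤ)) '' Set.univ).IsPWO :=
    ((Set.isWF_univ_iff.mpr ⟨wellFounded_lt⟩).isPWO).image_of_monotone
      (fun i j hij => by omega)
  have heq : Set.Ici a = (fun k : ℕ => a + (k : ℤ)) '' Set.univ := by
    ext m
    simp only [Set.image_univ, Set.mem_range, Set.mem_Ici]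
    constructor
    · intro hm; exact ⟨(m - a).toNat, by omega⟩
    · rintro ⟨k, rfl⟩; omega
  rw [heq]; exact h2

/-- `η_S(x,y)`: the Laurent series whose coefficient of `t^m` is
`∑_{n ∈ S} x_{m-n} · y_{m+n}` (a finite sum for each `m`). -/
def etaS (p : ℕ) (S : Set ℕ) (x y : Kp p) : Kp p :=
  ⟨fun m => ∑ᶠ n ∈ S, x.coeff (m - (n : ℤ)) * y.coeff (m + (n : ℤ)), by
    refine (isPWO_Ici x.order).mono ?_
    intro m hm
    simp only [Function.mem_support] at hm
    rw [Set.mem_Ici]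
    by_contra hlt
    push_neg at hlt
    apply hm
    apply finsum_mem_of_eqOn_zero
    intro n _
    have hc : x.coeff (m - (n : ℤ)) = 0 :=
      HahnSeries.coeff_eq_zero_of_lt_order (by omega)
    show x.coeff (m - (n : ℤ)) * y.coeff (m + (n : ℤ)) = (0 : ℕ → ZMod p) n
    rw [hc, zero_mul, Pi.zero_apply]⟩

lemma etaS_coeff (p : ℕ) (S : Set ℕ) (x y : Kp p) (m : ℤ) :
    (etaS p S x y).coeff m = ∑ᶠ n ∈ S, x.coeff (m - (n : ℤ)) * y.coeff (m + (n : ℤ)) := rfl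

lemma eta_supp_finite (p : ℕ) (S : Set ℕ) (x y : Kp p) (m : ℤ) :
    (S ∩ Function.support fun n : ℕ => x.coeff (m - (n : ℤ)) * y.coeff (m + (n : ℤ))).Finite := by
  by_cases hx : x = 0
  · subst hx
    have : (Function.support fun n : ℕ =>
        (0 : Kp p).coeff (m - (n : ℤ)) * y.coeff (m + (n : ℤ))) = ∅ := by
      ext n; simp
    rw [this, Set.inter_empty]
    exact Set.finite_empty
  · refine Set.Finite.subset (Set.finite_Iic (m - x.order).toNat) ?_
    rintro n ⟨hnS, hn⟩
    simp only [Function.mem_support] at hn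
    have hc : x.coeff (m - (n : ℤ)) ≠ 0 := fun h => hn (by rw [h, zero_mul])
    have hord := HahnSeries.order_le_of_coeff_ne_zero hc
    simp only [Set.mem_Iic]
    omega

lemma etaS_add_left (p : ℕ) (S : Set ℕ) (x y z : Kp p) :
    etaS p S (x + y) z = etaS p S x z + etaS p S y z := by
  apply HahnSeries.ext
  funext m
  rw [HahnSeries.coeff_add, etaS_coeff, etaS_coeff, etaS_coeff]
  rw [← finsum_mem_add_distrib' (eta_supp_finite p S x z m) (eta_supp_finite p S y z m)]
  apply finsum_mem_congr rfl
  intro n _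
  rw [HahnSeries.coeff_add, add_mul]

lemma etaS_add_right (p : ℕ) (S : Set ℕ) (x y z : Kp p) :
    etaS p S x (y + z) = etaS p S x y + etaS p S x z := by
  apply HahnSeries.ext
  funext m
  rw [HahnSeries.coeff_add, etaS_coeff, etaS_coeff, etaS_coeff]
  rw [← finsum_mem_add_distrib' (eta_supp_finite p S x y m) (eta_supp_finite p S x z m)]
  apply finsum_mem_congr rfl
  intro n _
  rw [HahnSeries.coeff_add, mul_add]

lemma etaS_zero_left (p : ℕ) (S : Set ℕ) (y : Kp p) : etaS p S 0 y = 0 := by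
  apply HahnSeries.ext
  funext m
  rw [etaS_coeff, HahnSeries.coeff_zero]
  apply finsum_mem_of_eqOn_zero
  intro n _
  show (0 : Kp p).coeff (m - (n : ℤ)) * y.coeff (m + (n : ℤ)) = (0 : ℕ → ZMod p) n
  rw [HahnSeries.coeff_zero, zero_mul, Pi.zero_apply]

lemma etaS_zero_right (p : ℕ) (S : Set ℕ) (x : Kp p) : etaS p S x 0 = 0 := by
  apply HahnSeries.ext
  funext m
  rw [etaS_coeff, HahnSeries.coeff_zero]
  apply finsum_mem_of_eqOn_zero
  intro n _
  show x.coeff (m - (n : ℤ)) * (0 : Kp p).coeff (m + (n : ℤ)) = (0 : ℕ → ZMod p) n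
  rw [HahnSeries.coeff_zero, mul_zero, Pi.zero_apply]

lemma etaS_neg_comm (p : ℕ) (S : Set ℕ) (x y : Kp p) :
    etaS p S (-x) y = etaS p S x (-y) := by
  apply HahnSeries.ext
  funext m
  rw [etaS_coeff, etaS_coeff]
  apply finsum_mem_congr rfl
  intro n _
  rw [HahnSeries.coeff_neg, HahnSeries.coeff_neg, neg_mul, mul_neg]

/-- The central extension `G_S = 𝔽_p((t)) ×_{η_S} 𝔽_p((t))`: underlying set `K × K` with
multiplication `(w,x)(y,z) = (w + y + η_S(x,z), x + z)`. -/
@[ext] structure GS (p : ℕ) (S : Set ℕ) : Type where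
  a : Kp p
  b : Kp p

namespace GS

variable {p : ℕ} {S : Set ℕ}

instance : Mul (GS p S) := ⟨fun g h => ⟨g.a + h.a + etaS p S g.b h.b, g.b + h.b⟩⟩
instance : One (GS p S) := ⟨⟨0, 0⟩⟩
instance : Inv (GS p S) := ⟨fun g => ⟨-g.a - etaS p S g.b (-g.b), -g.b⟩⟩

@[simp] lemma mul_a (g h : GS p S) : (g * h).a = g.a + h.a + etaS p S g.b h.b := rfl
@[simp] lemma mul_b (g h : GS p S) : (g * h).b = g.b + h.b := rfl
@[simp] lemma one_a : (1 : GS p S).a = 0 := rfl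
@[simp] lemma one_b : (1 : GS p S).b = 0 := rfl
@[simp] lemma inv_a (g : GS p S) : (g⁻¹).a = -g.a - etaS p S g.b (-g.b) := rfl
@[simp] lemma inv_b (g : GS p S) : (g⁻¹).b = -g.b := rfl

instance instGroup : Group (GS p S) where
  mul := (· * ·)
  one := 1
  inv := (·⁻¹)
  mul_assoc g h k := by
    ext
    · simp only [mul_a, mul_b]
      rw [etaS_add_left, etaS_add_right]
      abel_nf
    · simp only [mul_b]
      abel_nf
  one_mul g := by
    ext
    · simp [etaS_zero_left]
    · simp
  mul_one g := by
    ext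
    · simp [etaS_zero_right]
    · simp
  inv_mul_cancel g := by
    ext
    · simp only [mul_a, inv_a, inv_b, one_a, etaS_neg_comm]
      abel_nf
    · simp only [mul_b, inv_b, one_b]
      abel_nf

end GS

lemma etaS_neg_left (p : ℕ) (S : Set ℕ) (x y : Kp p) :
    etaS p S (-x) y = -(etaS p S x y) := by
  have h := etaS_add_left p S (-x) x y
  rw [neg_add_cancel, etaS_zero_left] at h
  exact eq_neg_of_add_eq_zero_left h.symm

lemma etaS_neg_right (p : ℕ) (S : Set ℕ) (x y : Kp p) :
    etaS p S x (-y) = -(etaS p S x y) := by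
  rw [← etaS_neg_comm, etaS_neg_left]

lemma etaS_single_single (p : ℕ) (S : Set ℕ) (hS : ∀ n ∈ S, 1 ≤ n) (j : ℤ) (k : ℕ) :
    etaS p S (HahnSeries.single j (1 : ZMod p))
      (HahnSeries.single (j + 2 * (k : ℤ)) (1 : ZMod p)) =
    HahnSeries.single (j + (k : ℤ)) (S.indicator (fun _ => (1 : ZMod p)) k) := by
  classical
  apply HahnSeries.ext
  funext m
  rw [etaS_coeff, finsum_mem_def, finsum_eq_single _ k]
  · by_cases hk : k ∈ S <;> by_cases hm : m = j + (k : ℤ) <;>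
      simp [Set.indicator_apply, hk, hm, HahnSeries.coeff_single] <;>
    · intro h; omega
  · intro n hn
    rw [Set.indicator_apply]
    split_ifs with hnS
    · by_cases h1 : m - (n : ℤ) = j
      · have h2 : m + (n : ℤ) ≠ j + 2 * (k : ℤ) := by
          intro h; apply hn; omega
        rw [HahnSeries.coeff_single_of_ne h2, mul_zero]
      · rw [HahnSeries.coeff_single_of_ne h1, zero_mul]
    · rfl

lemma etaS_single_single_rev (p : ℕ) (S : Set ℕ) (hS : ∀ n ∈ S, 1 ≤ n) (j : ℤ) (k : ℕ)
    (hk : 1 ≤ k) :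
    etaS p S (HahnSeries.single (j + 2 * (k : ℤ)) (1 : ZMod p))
      (HahnSeries.single j (1 : ZMod p)) = 0 := by
  apply HahnSeries.ext
  funext m
  rw [etaS_coeff, HahnSeries.coeff_zero]
  apply finsum_mem_of_eqOn_zero
  intro n hn
  have h1 : 1 ≤ n := hS n hn
  show (HahnSeries.single (j + 2 * (k : ℤ)) (1 : ZMod p)).coeff (m - (n : ℤ)) *
      (HahnSeries.single j (1 : ZMod p)).coeff (m + (n : ℤ)) = (0 : ℕ → ZMod p) n
  by_cases hc : m - (n : ℤ) = j + 2 * (k : ℤ)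
  · have h2 : m + (n : ℤ) ≠ j := by omega
    rw [HahnSeries.coeff_single_of_ne h2, mul_zero, Pi.zero_apply]
  · rw [HahnSeries.coeff_single_of_ne hc, zero_mul, Pi.zero_apply]

lemma etaS_single_self (p : ℕ) (S : Set ℕ) (hS : ∀ n ∈ S, 1 ≤ n) (j : ℤ) :
    etaS p S (HahnSeries.single j (1 : ZMod p)) (HahnSeries.single j (1 : ZMod p)) = 0 := by
  have h := etaS_single_single p S hS j 0
  simp only [Nat.cast_zero, mul_zero, add_zero] at h
  rw [h, Set.indicator_of_notMem (fun h0 => by simpa using hS 0 h0)]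
  exact HahnSeries.single_eq_zero

/-- Let `S ⊆ {1,2,3,…}`.  In the group `G_S`, for all `w,x,y,z ∈ K` the
commutator satisfies
`⁅(w,x),(y,z)⁆ = (w,x)(y,z)(w,x)⁻¹(y,z)⁻¹
  = (η_S(x,z) − η_S(x,−x) − η_S(z,−z) + η_S(−x,−z) + η_S(x+z, −(x+z)), 0)`;
in particular every commutator lies in the central subgroup `N = K × {0}`.  Moreover for every
`j ∈ ℤ` and every integer `k ≥ 1`,
`⁅(0, t^j), (0, t^{j+2k})⁆ = (s_k · t^{j+k}, 0)` where `s_k = 1` if `k ∈ S` and `0` otherwise. -/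
theorem statement7 (p : ℕ) (hp : p.Prime) (S : Set ℕ) (hS : ∀ n ∈ S, 1 ≤ n) :
    (∀ g h : GS p S, ⁅g, h⁆ = g * h * g⁻¹ * h⁻¹) ∧
    (∀ w x y z : Kp p,
      ⁅(⟨w, x⟩ : GS p S), (⟨y, z⟩ : GS p S)⁆ =
        ⟨etaS p S x z - etaS p S x (-x) - etaS p S z (-z) + etaS p S (-x) (-z)
          + etaS p S (x + z) (-(x + z)), 0⟩) ∧
    (∀ g h : GS p S, (⁅g, h⁆).b = 0) ∧
    (∀ (c : Kp p) (g : GS p S), (⟨c, 0⟩ : GS p S) * g = g * ⟨c, 0⟩) ∧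
    (∀ (j : ℤ) (k : ℕ), 1 ≤ k →
      ⁅(⟨0, HahnSeries.single j (1 : ZMod p)⟩ : GS p S),
        (⟨0, HahnSeries.single (j + 2 * (k : ℤ)) (1 : ZMod p)⟩ : GS p S)⁆ =
        ⟨HahnSeries.single (j + (k : ℤ)) (S.indicator (fun _ => (1 : ZMod p)) k), 0⟩) := by
  have comm : ∀ g h : GS p S, ⁅g, h⁆ = g * h * g⁻¹ * h⁻¹ := fun g h => rfl
  have part2 : ∀ w x y z : Kp p,
      ⁅(⟨w, x⟩ : GS p S), (⟨y, z⟩ : GS p S)⁆ =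
        ⟨etaS p S x z - etaS p S x (-x) - etaS p S z (-z) + etaS p S (-x) (-z)
          + etaS p S (x + z) (-(x + z)), 0⟩ := by
    intro w x y z
    rw [comm]
    refine GS.ext ?_ ?_
    · show w + y + etaS p S x z + (-w - etaS p S x (-x)) + etaS p S (x + z) (-x)
        + (-y - etaS p S z (-z)) + etaS p S (x + z + -x) (-z) = _
      simp only [etaS_add_left, etaS_add_right, etaS_neg_left, etaS_neg_right, neg_neg]
      abel
    · show x + z + -x + -z = 0
      abel
  refine ⟨comm, part2, ?_, ?_, ?_⟩
  · intro g h
    obtain ⟨w, x⟩ := g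
    obtain ⟨y, z⟩ := h
    rw [part2]
  · intro c g
    refine GS.ext ?_ ?_
    · simp only [GS.mul_a, GS.mul_b, etaS_zero_left, etaS_zero_right]
      abel
    · simp only [GS.mul_b]
      abel
  · intro j k hk
    rw [part2]
    congr 1
    simp only [etaS_add_left, etaS_add_right, etaS_neg_left, etaS_neg_right, neg_neg,
      etaS_single_self p S hS, etaS_single_single p S hS, etaS_single_single_rev p S hS j k hk]
    abel
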